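/- With probability at least 1 − 2/n, simultaneously for every ordered pair of distinct nodes (i,j) one has C′_{ij} ≤ C_{ij} ≤ C″_{ij}; consequently, with probability at least 1 − 2/n, every s-t-cut capacity satisfies C′_k ≤ C_k ≤ C″_k simultaneously for all cuts. (Here the hypothesis ε₁ ≤ 1 and ε₁′ ≤ 1 is assumed.) -/

import Mathlib

open MeasureTheory ProbabilityTheory

/-- The two-dimensional unit torus. -/
abbrev Torus : Type := AddCircle (1 : ℝ) × AddCircle (1 : ℝ)

/-- The capacity of the `s`-`t`-cut determined by the set `V` of relays:
`C_k = Σ_{u_i ∉ V} C_{s u_i} + Σ_{u_j ∈ V} Σ_{u_i ∉ V} C_{u_j u_i} + Σ_{u_j ∈ V} C_{u_j t}`. -/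
noncomputable def cutCap {Ω : Type*} {n m : ℕ} (C : Fin n → Fin n → Ω → ℝ)
    (s t : Fin n) (u : Fin m → Fin n) (V : Finset (Fin m)) (ω : Ω) : ℝ :=
  ∑ i ∈ Vᶜ, C s (u i) ω + ∑ j ∈ V, ∑ i ∈ Vᶜ, C (u j) (u i) ω + ∑ j ∈ V, C (u j) t ω

/-!
The interference `J(j) = ∑_{k ≠ j} L(d_{kj})` is concentrated around `E[J] = (n-1) E[L]`.
Conditionally on `X_j`, the differences `X_k - X_j` are i.i.d. uniform (the Haar measure of the
torus is translation invariant), so the mgf of `J(j)` is the `(n-1)`-st power of the mgf of one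
term; since `L ∈ [0,1]`, that one is dominated by the Poisson mgf `exp ((eᵗ - 1) E[L])`.
The multiplicative Chernoff bounds then give
`P(J(j) ≥ (1+ε₁') E[J]) ≤ exp (-ε₁'² E[J] / 3) = n⁻²` and
`P(J(j) ≤ (1-ε₁) E[J]) ≤ exp (-ε₁² E[J] / 2) = n⁻²`, and a union bound over the `n` nodes
leaves probability `≥ 1 - 2/n` for `(1-ε₁) E[J] ≤ J(j) ≤ (1+ε₁') E[J]` at every node.
On that event every `C_{ij}`, a threshold indicator antitone in the interference level, lies
between `C'_{ij}` and `C''_{ij}`, and cut capacities are monotone in the link capacities.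
-/

open Real Finset

instance : IsProbabilityMeasure (volume : Measure (AddCircle (1 : ℝ))) :=
  ⟨by simp [AddCircle.measure_univ]⟩

instance : IsProbabilityMeasure (volume : Measure Torus) := by
  rw [Measure.volume_eq_prod]; infer_instance

instance : (volume : Measure Torus).IsAddLeftInvariant := by
  rw [Measure.volume_eq_prod]; infer_instance

theorem exp_le_one_add_add_two_thirds_sq {x : ℝ} (h₀ : 0 ≤ x) (h₁ : x ≤ 1 / 2) :
    exp x ≤ 1 + x + 2 / 3 * x ^ 2 := by
  have h := exp_bound' h₀ (by linarith) (n := 3) (by norm_num)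
  norm_num [sum_range_succ, Nat.factorial] at h
  nlinarith [mul_nonneg (mul_nonneg h₀ h₀) (sub_nonneg.2 h₁)]

theorem exp_neg_le_one_sub_add_sq_div_two {x : ℝ} (h₀ : 0 ≤ x) :
    exp (-x) ≤ 1 - x + x ^ 2 / 2 := by
  rcases le_or_gt x 1 with h₁ | h₁
  · have h := abs_le.1 (exp_bound (x := -x) (by rwa [abs_neg, abs_of_nonneg h₀]) (n := 4)
      (by norm_num))
    norm_num [sum_range_succ, Nat.factorial, abs_of_nonneg h₀] at h
    nlinarith [h.2, mul_nonneg (pow_nonneg h₀ 3) (sub_nonneg.2 h₁)]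
  · nlinarith [exp_le_exp.2 (neg_le_neg h₁.le), exp_neg_one_lt_half]

theorem exp_mul_le_one_add_mul {t l : ℝ} (hl₀ : 0 ≤ l) (hl₁ : l ≤ 1) :
    exp (t * l) ≤ 1 + (exp t - 1) * l := by
  have h := convexOn_exp.2 (Set.mem_univ 0) (Set.mem_univ t) (sub_nonneg.2 hl₁) hl₀
    (sub_add_cancel 1 l)
  simp only [smul_eq_mul, mul_zero, zero_add, exp_zero, mul_one] at h
  rw [mul_comm]
  linarith

theorem mgf_le_exp_mul_integral {α : Type*} [MeasurableSpace α] {ν : Measure α}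
    [IsProbabilityMeasure ν] {h : α → ℝ} (hh : AEMeasurable h ν)
    (h01 : ∀ x, h x ∈ Set.Icc (0 : ℝ) 1) (t : ℝ) :
    mgf h ν t ≤ exp ((exp t - 1) * ∫ x, h x ∂ν) := by
  have hint : Integrable h ν := .of_mem_Icc 0 1 hh (ae_of_all _ h01)
  calc mgf h ν t ≤ ∫ x, 1 + (exp t - 1) * h x ∂ν :=
        integral_mono (integrable_exp_mul_of_mem_Icc hh (ae_of_all _ h01))
          ((integrable_const 1).add (hint.const_mul _))
          fun x => exp_mul_le_one_add_mul (h01 x).1 (h01 x).2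
    _ = (exp t - 1) * (∫ x, h x ∂ν) + 1 := by
        rw [integral_add (integrable_const 1) (hint.const_mul _), integral_const_mul]
        simp [add_comm]
    _ ≤ exp ((exp t - 1) * ∫ x, h x ∂ν) := add_one_le_exp _

section Chernoff

variable {Ω : Type*} {mΩ : MeasurableSpace Ω} {μ : Measure Ω} [IsFiniteMeasure μ] {X : Ω → ℝ}
  {c δ δ' : ℝ}

-- `t = δ / 2` and `t = -δ` instead of the optimal `t = log (1 ± δ)` keep the exponents polynomial.
theorem measureReal_ge_one_add_mul_le_of_mgf_le
    (hX : ∀ t, Integrable (fun ω => exp (t * X ω)) μ)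
    (hmgf : ∀ t, mgf X μ t ≤ exp ((exp t - 1) * c)) (hc : 0 ≤ c) (h₀ : 0 ≤ δ) (h₁ : δ ≤ 1) :
    μ.real {ω | (1 + δ) * c ≤ X ω} ≤ exp (-(δ ^ 2 / 3) * c) :=
  calc μ.real {ω | (1 + δ) * c ≤ X ω}
      ≤ exp (-(δ / 2) * ((1 + δ) * c)) * mgf X μ (δ / 2) :=
        measure_ge_le_exp_mul_mgf _ (by positivity) (hX _)
    _ ≤ exp (-(δ / 2) * ((1 + δ) * c)) * exp ((exp (δ / 2) - 1) * c) := by gcongr; exact hmgf _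
    _ = exp ((exp (δ / 2) - 1 - δ / 2 * (1 + δ)) * c) := by rw [← exp_add]; ring_nf
    _ ≤ exp (-(δ ^ 2 / 3) * c) := by
        gcongr
        nlinarith [exp_le_one_add_add_two_thirds_sq (x := δ / 2) (by positivity) (by linarith)]

theorem measureReal_le_one_sub_mul_le_of_mgf_le
    (hX : ∀ t, Integrable (fun ω => exp (t * X ω)) μ)
    (hmgf : ∀ t, mgf X μ t ≤ exp ((exp t - 1) * c)) (hc : 0 ≤ c) (h₀ : 0 ≤ δ) :
    μ.real {ω | X ω ≤ (1 - δ) * c} ≤ exp (-(δ ^ 2 / 2) * c) :=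
  calc μ.real {ω | X ω ≤ (1 - δ) * c}
      ≤ exp (-(-δ) * ((1 - δ) * c)) * mgf X μ (-δ) :=
        measure_le_le_exp_mul_mgf _ (by linarith) (hX _)
    _ ≤ exp (-(-δ) * ((1 - δ) * c)) * exp ((exp (-δ) - 1) * c) := by gcongr; exact hmgf _
    _ = exp ((δ * (1 - δ) + exp (-δ) - 1) * c) := by rw [← exp_add]; ring_nf
    _ ≤ exp (-(δ ^ 2 / 2) * c) := by
        gcongr
        linarith [exp_neg_le_one_sub_add_sq_div_two h₀]

theorem measure_notMem_Icc_le_of_mgf_le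
    (hX : ∀ t, Integrable (fun ω => exp (t * X ω)) μ)
    (hmgf : ∀ t, mgf X μ t ≤ exp ((exp t - 1) * c)) (hc : 0 ≤ c) (h₀ : 0 ≤ δ)
    (h₀' : 0 ≤ δ') (h₁' : δ' ≤ 1) :
    μ {ω | ¬((1 - δ) * c ≤ X ω ∧ X ω ≤ (1 + δ') * c)}
      ≤ ENNReal.ofReal (exp (-(δ ^ 2 / 2) * c) + exp (-(δ' ^ 2 / 3) * c)) :=
  calc μ {ω | ¬((1 - δ) * c ≤ X ω ∧ X ω ≤ (1 + δ') * c)}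
      ≤ μ ({ω | X ω ≤ (1 - δ) * c} ∪ {ω | (1 + δ') * c ≤ X ω}) :=
        measure_mono fun ω hω => (not_and_or.1 hω).imp (fun h => (not_le.1 h).le)
          fun h => (not_le.1 h).le
    _ ≤ μ {ω | X ω ≤ (1 - δ) * c} + μ {ω | (1 + δ') * c ≤ X ω} := measure_union_le _ _
    _ = ENNReal.ofReal (μ.real {ω | X ω ≤ (1 - δ) * c})
          + ENNReal.ofReal (μ.real {ω | (1 + δ') * c ≤ X ω}) := by
        rw [ofReal_measureReal, ofReal_measureReal]
    _ ≤ ENNReal.ofReal (exp (-(δ ^ 2 / 2) * c)) + ENNReal.ofReal (exp (-(δ' ^ 2 / 3) * c)) := by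
        gcongr
        exacts [measureReal_le_one_sub_mul_le_of_mgf_le hX hmgf hc h₀,
          measureReal_ge_one_add_mul_le_of_mgf_le hX hmgf hc h₀' h₁']
    _ = ENNReal.ofReal (exp (-(δ ^ 2 / 2) * c) + exp (-(δ' ^ 2 / 3) * c)) :=
        (ENNReal.ofReal_add (exp_pos _).le (exp_pos _).le).symm

end Chernoff

theorem one_sub_card_mul_le_measure_forall {Ω ι : Type*} {mΩ : MeasurableSpace Ω}
    {μ : Measure Ω} [IsProbabilityMeasure μ] [Fintype ι] {p : ι → Ω → Prop} {q : ENNReal}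
    (h : ∀ i, μ {ω | ¬p i ω} ≤ q) : 1 - Fintype.card ι * q ≤ μ {ω | ∀ i, p i ω} := by
  have hcompl : μ {ω | ∀ i, p i ω}ᶜ ≤ Fintype.card ι * q :=
    calc μ {ω | ∀ i, p i ω}ᶜ = μ (⋃ i, {ω | ¬p i ω}) := by congr 1; ext; simp
      _ ≤ ∑ i, μ {ω | ¬p i ω} := measure_iUnion_fintype_le _ _
      _ ≤ ∑ _i : ι, q := sum_le_sum fun i _ => h i
      _ = Fintype.card ι * q := by rw [sum_const, nsmul_eq_mul, card_univ]
  rw [tsub_le_iff_right, ← measure_univ (μ := μ)]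
  exact (measure_univ_le_add_compl _).trans (add_le_add_right hcompl _)

section Independence

variable {Ω G : Type*} {mΩ : MeasurableSpace Ω} [MeasurableSpace G] {μ : Measure Ω}
  [IsProbabilityMeasure μ] {ν : Measure G} {Y Z : Ω → G}

theorem ProbabilityTheory.IndepFun.map_sub_eq [AddGroup G] [MeasurableAdd₂ G] [MeasurableNeg G]
    [IsProbabilityMeasure ν] [ν.IsAddRightInvariant]
    (hY : Measurable Y) (hZ : Measurable Z) (hYZ : IndepFun Y Z μ) (hYν : μ.map Y = ν) :
    μ.map (Y - Z) = ν := by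
  have hlaw : μ.map (fun ω => (Y ω, Z ω)) = ν.prod (μ.map Z) := by
    rw [← hYν]
    exact (indepFun_iff_map_prod_eq_prod_map_map hY.aemeasurable hZ.aemeasurable).1 hYZ
  have hsub : (fun p : G × G => p.1 - p.2) = Prod.fst ∘ fun p => (p.1 - p.2, p.2) := rfl
  have := Measure.isProbabilityMeasure_map (μ := μ) hZ.aemeasurable
  rw [show Y - Z = (fun p : G × G => p.1 - p.2) ∘ fun ω => (Y ω, Z ω) from rfl,
    ← Measure.map_map (by fun_prop) (hY.prodMk hZ), hlaw, hsub,
    ← Measure.map_map measurable_fst (by fun_prop),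
    (measurePreserving_sub_prod ν (μ.map Z)).map_eq, Measure.map_fst_prod, measure_univ, one_smul]

theorem ProbabilityTheory.IndepFun.integral_comp_dist [NormedAddCommGroup G] [BorelSpace G]
    [SecondCountableTopology G] [IsProbabilityMeasure ν] [ν.IsAddRightInvariant]
    (hY : Measurable Y) (hZ : Measurable Z) (hYZ : IndepFun Y Z μ) (hYν : μ.map Y = ν)
    {g : ℝ → ℝ} (hg : Measurable g) :
    ∫ ω, g (dist (Y ω) (Z ω)) ∂μ = ∫ y, g ‖y‖ ∂ν := by
  rw [← hYZ.map_sub_eq hY hZ hYν, integral_map (f := fun y => g ‖y‖) (hY.sub hZ).aemeasurable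
    (hg.comp measurable_norm).aestronglyMeasurable]
  simp only [dist_eq_norm, Pi.sub_apply]

end Independence

theorem integral_prod_erase_eq_pow {α : Type*} [MeasurableSpace α] {ν : Measure α}
    [IsProbabilityMeasure ν] {N : ℕ} (j : Fin (N + 1)) {f : α → α → ℝ}
    (hf : Measurable (Function.uncurry f)) {M : ℝ} (hfM : ∀ y c, |f y c| ≤ M) {B : ℝ}
    (hB : ∀ c, ∫ y, f y c ∂ν = B) :
    ∫ x, ∏ k ∈ univ.erase j, f (x k) (x j) ∂Measure.pi (fun _ => ν) = B ^ N := by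
  have hsplit : ∀ p : α × (Fin N → α),
      ∏ k ∈ univ.erase j, f ((MeasurableEquiv.piFinSuccAbove (fun _ => α) j).symm p k)
        ((MeasurableEquiv.piFinSuccAbove (fun _ => α) j).symm p j) = ∏ i, f (p.2 i) p.1 := by
    rintro ⟨c, y⟩
    rw [Fin.univ_succAbove N j, erase_cons, prod_map]
    simp [MeasurableEquiv.piFinSuccAbove_symm_apply]
  have hmeas : Measurable fun p : α × (Fin N → α) => ∏ i, f (p.2 i) p.1 :=
    Finset.measurable_prod _ fun i _ =>
      hf.comp (f := fun p : α × (Fin N → α) => (p.2 i, p.1)) (by fun_prop)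
  have hint : Integrable (fun p : α × (Fin N → α) => ∏ i, f (p.2 i) p.1)
      (ν.prod (Measure.pi fun _ => ν)) := by
    refine Integrable.of_bound hmeas.aestronglyMeasurable (M ^ N) (ae_of_all _ fun p => ?_)
    calc ‖∏ i, f (p.2 i) p.1‖ = ∏ i, |f (p.2 i) p.1| := by rw [norm_prod]; rfl
      _ ≤ ∏ _i : Fin N, M := prod_le_prod (fun _ _ => abs_nonneg _) fun i _ => hfM _ _
      _ = M ^ N := by rw [prod_const, card_univ, Fintype.card_fin]
  have hinner (c : α) : ∫ y : Fin N → α, ∏ i, f (y i) c ∂Measure.pi (fun _ => ν) = B ^ N := by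
    rw [integral_fintype_prod_eq_pow (fun z => f z c), hB, Fintype.card_fin]
  rw [← (measurePreserving_piFinSuccAbove (fun _ => ν) j).symm.integral_comp',
    integral_congr_ae (ae_of_all _ hsplit), integral_prod _ hint]
  simp [hinner]

section Interference

variable {Ω G : Type*} {mΩ : MeasurableSpace Ω} {μ : Measure Ω} {L : ℝ → ℝ}

def interference [Dist G] {n : ℕ} (X : Fin n → Ω → G) (L : ℝ → ℝ) (j : Fin n) (ω : Ω) : ℝ :=
  ∑ k ∈ univ.erase j, L (dist (X k ω) (X j ω))

theorem interference_mem_Icc [Dist G] {n : ℕ} (X : Fin n → Ω → G)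
    (hL01 : ∀ r, L r ∈ Set.Icc (0 : ℝ) 1) (j : Fin n) (ω : Ω) :
    interference X L j ω ∈ Set.Icc (0 : ℝ) n := by
  refine ⟨sum_nonneg fun k _ => (hL01 _).1, ?_⟩
  calc interference X L j ω ≤ (univ.erase j).card • (1 : ℝ) :=
        sum_le_card_nsmul _ _ _ fun k _ => (hL01 _).2
    _ ≤ n := by
        rw [nsmul_one]
        exact_mod_cast (card_erase_le.trans (card_univ.trans (Fintype.card_fin n)).le)

variable [NormedAddCommGroup G] [MeasurableSpace G] [BorelSpace G] [SecondCountableTopology G]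
  {ν : Measure G} [IsProbabilityMeasure ν] [ν.IsAddRightInvariant]

theorem measurable_interference {n : ℕ} {X : Fin n → Ω → G} (hX : ∀ j, Measurable (X j))
    (hL : Measurable L) (j : Fin n) : Measurable (interference X L j) :=
  Finset.measurable_sum _ fun k _ => hL.comp (measurable_dist.comp ((hX k).prodMk (hX j)))

theorem mgf_interference_eq_pow {N : ℕ} {X : Fin (N + 1) → Ω → G} (hX : ∀ j, Measurable (X j))
    (hindep : iIndepFun X μ) (hν : ∀ j, μ.map (X j) = ν) (hL : Measurable L)
    (hL01 : ∀ r, L r ∈ Set.Icc (0 : ℝ) 1) (j : Fin (N + 1)) (t : ℝ) :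
    mgf (interference X L j) μ t = mgf (fun y => L ‖y‖) ν t ^ N := by
  have hlaw : μ.map (fun ω k => X k ω) = Measure.pi fun _ => ν := by
    rw [hindep.map_fun_eq_pi_map fun k => (hX k).aemeasurable]
    simp_rw [hν]
  have hf : Measurable fun p : G × G => exp (t * L (dist p.1 p.2)) :=
    ((hL.comp measurable_dist).const_mul t).exp
  have hfM (y c : G) : |exp (t * L (dist y c))| ≤ exp |t| := by
    have := hL01 (dist y c)
    rw [abs_of_pos (exp_pos _), exp_le_exp]
    nlinarith [this.1, this.2, le_abs_self t, abs_nonneg t]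
  calc mgf (interference X L j) μ t
      = ∫ x, ∏ k ∈ univ.erase j, exp (t * L (dist (x k) (x j))) ∂(μ.map fun ω k => X k ω) := by
        rw [integral_map (f := fun x => ∏ k ∈ univ.erase j, exp (t * L (dist (x k) (x j))))
          (measurable_pi_lambda _ hX).aemeasurable
          (Finset.measurable_prod _ fun k _ => hf.comp
            ((measurable_pi_apply k).prodMk (measurable_pi_apply j))).aestronglyMeasurable]
        simp only [mgf, interference, mul_sum, exp_sum]
    _ = mgf (fun y => L ‖y‖) ν t ^ N := by
        rw [hlaw]
        refine integral_prod_erase_eq_pow j hf hfM fun c => ?_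
        simp_rw [dist_eq_norm]
        exact integral_sub_right_eq_self (fun y => exp (t * L ‖y‖)) c

theorem mgf_interference_le {N : ℕ} {X : Fin (N + 1) → Ω → G} (hX : ∀ j, Measurable (X j))
    (hindep : iIndepFun X μ) (hν : ∀ j, μ.map (X j) = ν) (hL : Measurable L)
    (hL01 : ∀ r, L r ∈ Set.Icc (0 : ℝ) 1) (j : Fin (N + 1)) (t : ℝ) :
    mgf (interference X L j) μ t ≤ exp ((exp t - 1) * (N * ∫ y, L ‖y‖ ∂ν)) := by
  rw [mgf_interference_eq_pow hX hindep hν hL hL01, mul_left_comm, exp_nat_mul]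
  exact pow_le_pow_left₀ mgf_nonneg
    (mgf_le_exp_mul_integral (hL.comp measurable_norm).aemeasurable (fun y => hL01 _) t) N

theorem one_sub_two_div_le_measure_interference_mem_Icc [IsProbabilityMeasure μ] {n : ℕ}
    (hn : 2 ≤ n) {X : Fin n → Ω → G} (hX : ∀ j, Measurable (X j)) (hindep : iIndepFun X μ)
    (hν : ∀ j, μ.map (X j) = ν) (hL : Measurable L) (hL01 : ∀ r, L r ∈ Set.Icc (0 : ℝ) 1)
    {EL : ℝ} (hEL_pos : 0 < EL)
    (hEL : ∀ j k : Fin n, j ≠ k → ∫ ω, L (dist (X k ω) (X j ω)) ∂μ = EL)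
    {ε ε' : ℝ} (hε : ε = √(4 * log n / ((n - 1) * EL)))
    (hε' : ε' = √(6 * log n / ((n - 1) * EL))) (hε'₁ : ε' ≤ 1) :
    1 - 2 / (n : ENNReal) ≤ μ {ω | ∀ j, (1 - ε) * ((n - 1) * EL) ≤ interference X L j ω ∧
      interference X L j ω ≤ (1 + ε') * ((n - 1) * EL)} := by
  obtain ⟨N, rfl⟩ : ∃ N, n = N + 2 := ⟨n - 2, by omega⟩
  set c : ℝ := ((N + 2 : ℕ) - 1 : ℝ) * EL with hc_def
  have hEL_eq : ∫ y, L ‖y‖ ∂ν = EL := by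
    rw [← hEL 0 1 Fin.zero_ne_one]
    exact ((hindep.indepFun Fin.zero_ne_one.symm).integral_comp_dist (hX 1) (hX 0) (hν 1) hL).symm
  have hc : c = (N + 1 : ℕ) * ∫ y, L ‖y‖ ∂ν := by rw [hEL_eq, hc_def]; push_cast; ring
  have hc_pos : 0 < c := by rw [hc_def]; push_cast; nlinarith
  have hmgf (j : Fin (N + 2)) (t : ℝ) : mgf (interference X L j) μ t ≤ exp ((exp t - 1) * c) :=
    hc ▸ mgf_interference_le hX hindep hν hL hL01 j t
  have hint (j : Fin (N + 2)) (t : ℝ) : Integrable (fun ω => exp (t * interference X L j ω)) μ :=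
    integrable_exp_mul_of_mem_Icc (measurable_interference hX hL j).aemeasurable
      (ae_of_all _ (interference_mem_Icc X hL01 j))
  have hlog : 0 ≤ log (N + 2 : ℕ) := log_natCast_nonneg _
  have hn_pos : (0 : ℝ) < (N + 2 : ℕ) := by positivity
  have hexp : exp (-(2 * log (N + 2 : ℕ))) = (((N + 2 : ℕ) : ℝ) ^ 2)⁻¹ := by
    rw [exp_neg, ← Nat.cast_ofNat, ← log_pow, exp_log (by positivity)]
  have hε_sq : -(ε ^ 2 / 2) * c = -(2 * log (N + 2 : ℕ)) := by
    rw [hε, sq_sqrt (div_nonneg (by positivity) hc_pos.le)]; field_simp; ring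
  have hε'_sq : -(ε' ^ 2 / 3) * c = -(2 * log (N + 2 : ℕ)) := by
    rw [hε', sq_sqrt (div_nonneg (by positivity) hc_pos.le)]; field_simp; ring
  refine (le_of_eq ?_).trans (one_sub_card_mul_le_measure_forall fun j =>
    measure_notMem_Icc_le_of_mgf_le (hint j) (hmgf j) hc_pos.le (hε ▸ sqrt_nonneg _)
      (hε' ▸ sqrt_nonneg _) hε'₁)
  rw [hε_sq, hε'_sq, hexp, Fintype.card_fin, ← ENNReal.ofReal_natCast,
    ← ENNReal.ofReal_mul hn_pos.le, ← ENNReal.ofReal_ofNat 2, ← ENNReal.ofReal_div_of_pos hn_pos]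
  congr 2
  field_simp
  ring

end Interference

-- `C^a_{ij}` of the paper, with `η = N₀/P₀` and `ℓ = L(d_{ij})`; `C_{ij}` is the case `a = J(j)`.
noncomputable def linkCapacity (β γ η a ℓ : ℝ) : ℝ :=
  if β * (η + γ * a) ≤ (1 + γ * β) * ℓ then 1 else 0

theorem linkCapacity_antitone {β γ η ℓ : ℝ} (hβ : 0 ≤ β) (hγ : 0 ≤ γ) :
    Antitone fun a => linkCapacity β γ η a ℓ := by
  intro a b hab
  have : β * (η + γ * a) ≤ β * (η + γ * b) := by gcongr
  simp only [linkCapacity]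
  split_ifs with hb ha
  exacts [le_rfl, absurd (this.trans hb) ha, zero_le_one, le_rfl]

theorem cutCap_mono {Ω : Type*} {n m : ℕ} {C D : Fin n → Fin n → Ω → ℝ} {ω : Ω}
    (h : ∀ i j, C i j ω ≤ D i j ω) (s t : Fin n) (u : Fin m → Fin n) (V : Finset (Fin m)) :
    cutCap C s t u V ω ≤ cutCap D s t u V ω := by
  unfold cutCap
  gcongr <;> apply h

theorem coupled_capacity_sandwich_general
    {Ω : Type*} [MeasureSpace Ω] [IsProbabilityMeasure (ℙ : Measure Ω)]
    (n : ℕ) (hn : 2 ≤ n)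
    (X : Fin n → Ω → Torus)
    (hXmeas : ∀ j, Measurable (X j))
    (hXindep : iIndepFun X ℙ)
    (hXunif : ∀ j, Measure.map (X j) ℙ = (volume : Measure Torus))
    (L : ℝ → ℝ) (hLmeas : Measurable L)
    (hL01 : ∀ x, L x ∈ Set.Icc (0 : ℝ) 1)
    (EL : ℝ) (hELpos : 0 < EL)
    (hEL : ∀ j k : Fin n, j ≠ k → ∫ ω, L (dist (X k ω) (X j ω)) ∂ℙ = EL)
    (P₀ N₀ γ β : ℝ) (hγ : 0 < γ) (hβ : 0 < β)
    (ε₁ ε₁' : ℝ)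
    (hε₁ : ε₁ = Real.sqrt (4 * Real.log n / (((n : ℝ) - 1) * EL)))
    (hε₁' : ε₁' = Real.sqrt (6 * Real.log n / (((n : ℝ) - 1) * EL)))
    (hε₁'le : ε₁' ≤ 1)
    (C C' C'' : Fin n → Fin n → Ω → ℝ)
    (hC : ∀ i j ω, C i j ω =
      if β * (N₀ / P₀ + γ * ∑ k ∈ Finset.univ.erase j, L (dist (X k ω) (X j ω)))
          ≤ (1 + γ * β) * L (dist (X i ω) (X j ω)) then 1 else 0)
    (hC' : ∀ i j ω, C' i j ω =
      if β * (N₀ / P₀ + γ * ((1 + ε₁') * (((n : ℝ) - 1) * EL)))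
          ≤ (1 + γ * β) * L (dist (X i ω) (X j ω)) then 1 else 0)
    (hC'' : ∀ i j ω, C'' i j ω =
      if β * (N₀ / P₀ + γ * ((1 - ε₁) * (((n : ℝ) - 1) * EL)))
          ≤ (1 + γ * β) * L (dist (X i ω) (X j ω)) then 1 else 0)
    (m : ℕ) (s t : Fin n) (u : Fin m → Fin n) :
    1 - 2 / (n : ENNReal)
      ≤ ℙ {ω | ∀ i j : Fin n, i ≠ j → C' i j ω ≤ C i j ω ∧ C i j ω ≤ C'' i j ω} ∧
    1 - 2 / (n : ENNReal)
      ≤ ℙ {ω | ∀ V : Finset (Fin m),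
            cutCap C' s t u V ω ≤ cutCap C s t u V ω ∧
            cutCap C s t u V ω ≤ cutCap C'' s t u V ω} := by
  have hgood := one_sub_two_div_le_measure_interference_mem_Icc hn hXmeas hXindep hXunif hLmeas
    hL01 hELpos hEL hε₁ hε₁' hε₁'le
  have hsandwich (ω : Ω) (hω : ∀ j, (1 - ε₁) * ((n - 1) * EL) ≤ interference X L j ω ∧
      interference X L j ω ≤ (1 + ε₁') * ((n - 1) * EL)) (i j : Fin n) :
      C' i j ω ≤ C i j ω ∧ C i j ω ≤ C'' i j ω := by
    rw [hC, hC', hC'']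
    exact ⟨linkCapacity_antitone hβ.le hγ.le (hω j).2,
      linkCapacity_antitone hβ.le hγ.le (hω j).1⟩
  exact ⟨hgood.trans (measure_mono fun ω hω i j _ => hsandwich ω hω i j),
    hgood.trans (measure_mono fun ω hω V =>
      ⟨cutCap_mono (fun i j => (hsandwich ω hω i j).1) s t u V,
        cutCap_mono (fun i j => (hsandwich ω hω i j).2) s t u V⟩)⟩

/-- with probability at least `1 - 2/n`, simultaneously for all ordered pairs of
distinct nodes `C'_{ij} ≤ C_{ij} ≤ C''_{ij}`, and consequently, with probability at least
`1 - 2/n`, every `s`-`t`-cut capacity satisfies `C'_k ≤ C_k ≤ C''_k` simultaneously. -/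
theorem coupled_capacity_sandwich
    {Ω : Type*} [MeasureSpace Ω] [IsProbabilityMeasure (ℙ : Measure Ω)]
    (n : ℕ) (hn : 2 ≤ n)
    (X : Fin n → Ω → Torus)
    (hXmeas : ∀ j, Measurable (X j))
    (hXindep : iIndepFun X ℙ)
    (hXunif : ∀ j, Measure.map (X j) ℙ = (volume : Measure Torus))
    (L : ℝ → ℝ) (hLmeas : Measurable L)
    (hL01 : ∀ x, L x ∈ Set.Icc (0 : ℝ) 1)
    (EL : ℝ) (hELpos : 0 < EL)
    (hEL : ∀ j k : Fin n, j ≠ k → ∫ ω, L (dist (X k ω) (X j ω)) ∂ℙ = EL)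
    (P₀ N₀ γ β : ℝ) (hP₀ : 0 < P₀) (hN₀ : 0 < N₀) (hγ : 0 < γ) (hβ : 0 < β)
    (ε₁ ε₁' : ℝ)
    (hε₁ : ε₁ = Real.sqrt (4 * Real.log n / (((n : ℝ) - 1) * EL)))
    (hε₁' : ε₁' = Real.sqrt (6 * Real.log n / (((n : ℝ) - 1) * EL)))
    (hε₁le : ε₁ ≤ 1) (hε₁'le : ε₁' ≤ 1)
    (C C' C'' : Fin n → Fin n → Ω → ℝ)
    (hC : ∀ i j ω, C i j ω =
      if β * (N₀ / P₀ + γ * ∑ k ∈ Finset.univ.erase j, L (dist (X k ω) (X j ω)))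
          ≤ (1 + γ * β) * L (dist (X i ω) (X j ω)) then 1 else 0)
    (hC' : ∀ i j ω, C' i j ω =
      if β * (N₀ / P₀ + γ * ((1 + ε₁') * (((n : ℝ) - 1) * EL)))
          ≤ (1 + γ * β) * L (dist (X i ω) (X j ω)) then 1 else 0)
    (hC'' : ∀ i j ω, C'' i j ω =
      if β * (N₀ / P₀ + γ * ((1 - ε₁) * (((n : ℝ) - 1) * EL)))
          ≤ (1 + γ * β) * L (dist (X i ω) (X j ω)) then 1 else 0)
    (m : ℕ) (s t : Fin n) (u : Fin m → Fin n)
    (hu : Function.Injective u) (hus : ∀ i, u i ≠ s) (hut : ∀ i, u i ≠ t) (hst : s ≠ t) :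
    1 - 2 / (n : ENNReal)
      ≤ ℙ {ω | ∀ i j : Fin n, i ≠ j → C' i j ω ≤ C i j ω ∧ C i j ω ≤ C'' i j ω} ∧
    1 - 2 / (n : ENNReal)
      ≤ ℙ {ω | ∀ V : Finset (Fin m),
            cutCap C' s t u V ω ≤ cutCap C s t u V ω ∧
            cutCap C s t u V ω ≤ cutCap C'' s t u V ω} :=
  coupled_capacity_sandwich_general n hn X hXmeas hXindep hXunif L hLmeas hL01 EL hELpos hEL P₀ N₀ γ
    β hγ hβ ε₁ ε₁' hε₁ hε₁' hε₁'le C C' C'' hC hC' hC'' m s t u
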